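/- arXiv:math/0009194 — 2 statements merged into one kernel-verified Lean document; each statement's English description precedes it below -/
import Mathlib

section
/- For all natural numbers q and r, the following identity holds in the endomorphism algebra of ℂ[X]: D^q ∘ M^r = Σ_{α=0}^{min(q,r)} C^α_{qr} • M^(r−α) ∘ D^(q−α), where C^α_{qr} = q!·r! / ((q−α)!·α!·(r−α)!) (equivalently C^α_{qr} = (q choose α)·(r choose α)·α!), with the coefficients cast into ℂ. -/
open Polynomial

/-- Multiplication by X on ℂ[X]. -/
noncomputable def M : Module.End ℂ (Polynomial ℂ) := LinearMap.mulLeft ℂ Polynomial.X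

/-- Formal derivative on ℂ[X]. -/
noncomputable def D : Module.End ℂ (Polynomial ℂ) := Polynomial.derivative

lemma heisenberg_DM : D * M = M * D + 1 := by
  apply LinearMap.ext
  intro p
  simp [D, M, Module.End.mul_apply, derivative_mul]
  ring

lemma heisenberg_DMpow_succ : ∀ k : ℕ,
    D * M ^ (k+1) = M ^ (k+1) * D + ((k+1 : ℕ) : ℂ) • M ^ k := by
  intro k
  induction k with
  | zero => simpa using heisenberg_DM
  | succ k ih =>
    rw [pow_succ, ← mul_assoc, ih, add_mul, mul_assoc, heisenberg_DM]
    rw [mul_add, mul_one, ← mul_assoc, ← pow_succ, smul_mul_assoc, ← pow_succ]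
    push_cast
    module

lemma heisenberg_DMpow (k : ℕ) :
    D * M ^ k = M ^ k * D + ((k : ℕ) : ℂ) • M ^ (k-1) := by
  cases k with
  | zero => simp
  | succ k => simpa using heisenberg_DMpow_succ k

lemma heisenberg_key (q r b : ℕ) :
    (((q+1).choose (b+1) * r.choose (b+1) * (b+1).factorial : ℕ) : ℂ)
      = ((q.choose (b+1) * r.choose (b+1) * (b+1).factorial : ℕ) : ℂ)
        + (((r - b) * (q.choose b * r.choose b * b.factorial) : ℕ) : ℂ) := by
  have h : ((r.choose (b+1) * (b+1) : ℕ) : ℂ) = ((r.choose b * (r - b) : ℕ) : ℂ) := by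
    exact_mod_cast congrArg (Nat.cast : ℕ → ℂ) (Nat.choose_succ_right_eq r b)
  rw [Nat.choose_succ_succ]
  push_cast [Nat.factorial_succ] at h ⊢
  linear_combination (↑(q.choose b) * ↑(b.factorial) : ℂ) * h

lemma heisenberg_main_aux (q r : ℕ) :
    D ^ q * M ^ r =
      ∑ α ∈ Finset.range (q + 1),
        ((q.choose α * r.choose α * α.factorial : ℕ) : ℂ) •
          (M ^ (r - α) * D ^ (q - α)) := by
  induction q with
  | zero => simp
  | succ q ih =>
    set g : ℕ → Module.End ℂ (Polynomial ℂ) := fun α =>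
      (((r - α) * (q.choose α * r.choose α * α.factorial) : ℕ) : ℂ) •
        (M ^ (r - (α+1)) * D ^ (q + 1 - (α+1))) with hg
    have hL : D ^ (q+1) * M ^ r
        = ∑ α ∈ Finset.range (q + 1),
            (((q.choose α * r.choose α * α.factorial : ℕ) : ℂ) •
              (M ^ (r - α) * D ^ (q + 1 - α))
            + g α) := by
      rw [pow_succ', mul_assoc, ih, Finset.mul_sum]
      refine Finset.sum_congr rfl fun α hα => ?_
      have hαq : α ≤ q := Nat.lt_succ_iff.mp (Finset.mem_range.mp hα)
      rw [mul_smul_comm, ← mul_assoc, heisenberg_DMpow (r - α), add_mul,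
        mul_assoc (M ^ (r - α)) D, ← pow_succ']
      have h1 : (q - α) + 1 = q + 1 - α := by omega
      have h2 : q - α = q + 1 - (α + 1) := by omega
      have h3 : r - α - 1 = r - (α + 1) := by omega
      rw [h1, h2, h3, hg, smul_mul_assoc]
      push_cast
      module
    rw [hL, Finset.sum_add_distrib]
    have hR : ∑ α ∈ Finset.range (q + 1 + 1),
        (((q+1).choose α * r.choose α * α.factorial : ℕ) : ℂ) •
          (M ^ (r - α) * D ^ (q + 1 - α))
      = ∑ α ∈ Finset.range (q + 1 + 1),
          ((((q.choose α * r.choose α * α.factorial : ℕ) : ℂ) •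
            (M ^ (r - α) * D ^ (q + 1 - α)))
          + (fun β => match β with
              | 0 => (0 : Module.End ℂ (Polynomial ℂ))
              | (b+1) => (((r - b) * (q.choose b * r.choose b * b.factorial) : ℕ) : ℂ) •
                  (M ^ (r - (b+1)) * D ^ (q + 1 - (b+1)))) α) := by
      refine Finset.sum_congr rfl fun α _ => ?_
      match α with
      | 0 => simp
      | (b+1) =>
        show _ = _ + (_ • _)
        rw [← add_smul, ← heisenberg_key q r b]
    rw [hR, Finset.sum_add_distrib]
    congr 1
    · symm
      rw [Finset.sum_range_succ]
      simp [Nat.choose_succ_self]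
    · symm
      rw [Finset.sum_range_succ']
      simp [hg]

/-- Formula (1.9): `y^q · x^r = Σ_α C^α_{qr} x^(r-α) · y^(q-α)` with
`C^α_{qr} = q!·r!/((q-α)!·α!·(r-α)!) = (q choose α)·(r choose α)·α!`. -/
theorem heisenberg_normal_ordering_pow (q r : ℕ) :
    D ^ q * M ^ r =
      ∑ α ∈ Finset.range (min q r + 1),
        ((q.choose α * r.choose α * α.factorial : ℕ) : ℂ) •
          (M ^ (r - α) * D ^ (q - α)) := by
  rw [heisenberg_main_aux q r]
  symm
  apply Finset.sum_subset
  · intro x hx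
    simp only [Finset.mem_range] at hx ⊢
    omega
  · intro x hx hx'
    simp only [Finset.mem_range] at hx hx'
    have : r < x := by omega
    simp [Nat.choose_eq_zero_of_lt this]
end

section
/- For all polynomials f and g in ℂ[x,y] and every natural number N with N ≥ totalDegree f, the product of the corresponding operators is given by Φ(f) ∘ Φ(g) = Φ( Σ_{α=0}^{N} (1/α!) • (∂_y^α f) · (∂_x^α g) ), where the sum, products and derivatives on the right-hand side are taken in the commutative polynomial ring ℂ[x,y] and (1/α!) denotes the inverse of α! in ℂ. -/
open Polynomial MvPolynomial

/-- Normal-ordering map: extends x^p·y^q ↦ M^p ∘ D^q by ℂ-linearity. -/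
noncomputable def Φ (f : MvPolynomial (Fin 2) ℂ) : Module.End ℂ (Polynomial ℂ) :=
  ∑ d ∈ f.support, f.coeff d • (M ^ d 0 * D ^ d 1)

/-! Both sides are bilinear in `(f, g)`, so it suffices to compare them on monomials
`x^p y^b` and `x^c y^q`. There the Leibniz rule gives the normal-ordering relation
`D^b M^c = ∑ₖ C(b,k) c(c-1)⋯(c-k+1) M^(c-k) D^(b-k)`, while `∂_y^k` and `∂_x^k` of the two
monomials produce the falling factorials `b(b-1)⋯(b-k+1) = k! C(b,k)` and `c(c-1)⋯(c-k+1)`.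
Truncating the sum at `N ≥ b` loses nothing, since `C(b,k) = 0` for `k > b`. -/

open Finset

theorem Polynomial.iterate_derivative_X_pow_mul_of_le {R : Type*} [CommSemiring R] {b N : ℕ}
    (hb : b ≤ N) (c : ℕ) (p : R[X]) :
    derivative^[b] (Polynomial.X ^ c * p) = ∑ k ∈ range (N + 1),
      (b.choose k * c.descFactorial k) • (Polynomial.X ^ (c - k) * derivative^[b - k] p) := by
  rw [mul_comm, iterate_derivative_mul]
  refine (sum_subset (range_subset_range.2 (by omega)) fun k _ hk => ?_).trans
    (sum_congr rfl fun k _ => ?_)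
  · rw [Nat.choose_eq_zero_of_lt (by simpa using hk), zero_smul]
  · rw [iterate_derivative_X_pow_eq_smul, mul_smul_comm, mul_comm, mul_smul, Nat.cast_smul_eq_nsmul]

theorem MvPolynomial.iterate_pderiv_monomial {σ R : Type*} [CommSemiring R] (i : σ) (n : ℕ)
    (s : σ →₀ ℕ) (a : R) :
    (pderiv i)^[n] (monomial s a) =
      monomial (s - Finsupp.single i n) (a * (s i).descFactorial n) := by
  induction n with
  | zero => simp
  | succ n ih =>
    rw [Function.iterate_succ_apply', ih, pderiv_monomial, tsub_tsub, ← Finsupp.single_add,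
      Finsupp.tsub_apply, Finsupp.single_eq_same, Nat.descFactorial_succ, Nat.cast_mul, mul_assoc,
      mul_comm ((s i - n : ℕ) : R)]

theorem MvPolynomial.bilinear_apply_eq_sum_monomial {σ R P : Type*} [CommSemiring R]
    [AddCommMonoid P] [Module R P] (B : MvPolynomial σ R →ₗ[R] MvPolynomial σ R →ₗ[R] P)
    (f g : MvPolynomial σ R) :
    B f g = ∑ d ∈ f.support, ∑ e ∈ g.support,
      B (monomial d (coeff d f)) (monomial e (coeff e g)) := by
  conv_lhs => rw [f.as_sum, g.as_sum]
  simp only [map_sum, LinearMap.sum_apply]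
  exact sum_comm

theorem M_pow_apply (n : ℕ) (p : ℂ[X]) : (M ^ n) p = Polynomial.X ^ n * p := by
  induction n with
  | zero => simp
  | succ n ih => rw [pow_succ', Module.End.mul_apply, ih]; simp [M, pow_succ', mul_assoc]

theorem D_pow_apply (n : ℕ) (p : ℂ[X]) : (D ^ n) p = derivative^[n] p := by
  rw [Module.End.pow_apply]; rfl

theorem D_pow_mul_M_pow_of_le {b N : ℕ} (hb : b ≤ N) (c : ℕ) :
    D ^ b * M ^ c = ∑ k ∈ range (N + 1),
      ((b.choose k * c.descFactorial k : ℕ) : ℂ) • (M ^ (c - k) * D ^ (b - k)) := by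
  refine LinearMap.ext fun p => ?_
  simp only [Module.End.mul_apply, M_pow_apply, D_pow_apply, LinearMap.sum_apply,
    LinearMap.smul_apply, iterate_derivative_X_pow_mul_of_le hb, Nat.cast_smul_eq_nsmul]

noncomputable def Φₗ : MvPolynomial (Fin 2) ℂ →ₗ[ℂ] Module.End ℂ ℂ[X] :=
  (basisMonomials (Fin 2) ℂ).constr ℂ fun d => M ^ d 0 * D ^ d 1

theorem Φₗ_apply (f : MvPolynomial (Fin 2) ℂ) : Φₗ f = Φ f := by
  rw [Φₗ, Module.Basis.constr_apply]; rfl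

theorem Φ_monomial (d : Fin 2 →₀ ℕ) (c : ℂ) : Φ (monomial d c) = c • (M ^ d 0 * D ^ d 1) := by
  have : monomial d c = c • basisMonomials (Fin 2) ℂ d := by simp [MvPolynomial.smul_monomial]
  rw [← Φₗ_apply, this, map_smul, Φₗ, Module.Basis.constr_basis]

noncomputable def heisenbergStar (N : ℕ) :
    MvPolynomial (Fin 2) ℂ →ₗ[ℂ] MvPolynomial (Fin 2) ℂ →ₗ[ℂ] MvPolynomial (Fin 2) ℂ :=
  ∑ α ∈ range (N + 1), (α.factorial : ℂ)⁻¹ •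
    (LinearMap.mul ℂ _).compl₁₂ ((pderiv 1).toLinearMap ^ α) ((pderiv 0).toLinearMap ^ α)

theorem heisenbergStar_apply (N : ℕ) (f g : MvPolynomial (Fin 2) ℂ) :
    heisenbergStar N f g = ∑ α ∈ range (N + 1),
      (α.factorial : ℂ)⁻¹ • ((pderiv 1)^[α] f * (pderiv 0)^[α] g) := by
  simp [heisenbergStar, Module.End.coe_pow]

theorem Φ_monomial_mul_Φ_monomial {N : ℕ} (d e : Fin 2 →₀ ℕ) (a b : ℂ) (hd : d 1 ≤ N) :
    Φ (monomial d a) * Φ (monomial e b) = Φ (heisenbergStar N (monomial d a) (monomial e b)) := by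
  rw [heisenbergStar_apply, ← Φₗ_apply (∑ _ ∈ _, _), map_sum, Φ_monomial, Φ_monomial,
    smul_mul_smul_comm, mul_assoc, ← mul_assoc (D ^ d 1), D_pow_mul_M_pow_of_le hd, sum_mul,
    mul_sum, smul_sum]
  refine sum_congr rfl fun α _ => ?_
  rw [map_smul, iterate_pderiv_monomial, iterate_pderiv_monomial, monomial_mul, Φₗ_apply,
    Φ_monomial, smul_smul, smul_mul_assoc, mul_smul_comm, smul_smul]
  congr 1
  · have hfact : (α.factorial : ℂ) ≠ 0 := mod_cast α.factorial_ne_zero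
    rw [Nat.descFactorial_eq_factorial_mul_choose (d 1)]
    push_cast
    field_simp
  · simp [pow_add, mul_assoc]

theorem Φ_mul_Φ_of_degreeOf_le {f : MvPolynomial (Fin 2) ℂ} {N : ℕ} (hf : f.degreeOf 1 ≤ N)
    (g : MvPolynomial (Fin 2) ℂ) : Φ f * Φ g = Φ (heisenbergStar N f g) := by
  simp only [← Φₗ_apply]
  change (LinearMap.mul ℂ _).compl₁₂ Φₗ Φₗ f g = (heisenbergStar N).compr₂ Φₗ f g
  rw [bilinear_apply_eq_sum_monomial, bilinear_apply_eq_sum_monomial]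
  refine sum_congr rfl fun d hd => sum_congr rfl fun e _ => ?_
  simpa only [LinearMap.compl₁₂_apply, LinearMap.compr₂_apply, LinearMap.mul_apply', Φₗ_apply]
    using Φ_monomial_mul_Φ_monomial d e _ _ ((monomial_le_degreeOf 1 hd).trans hf)

/-- Formula (2.3): multiplication in the Heisenberg algebra expressed through
commutative multiplication and differentiation of polynomials. -/
theorem heisenberg_product_formula (f g : MvPolynomial (Fin 2) ℂ) (N : ℕ)
    (hN : f.totalDegree ≤ N) :
    Φ f * Φ g =
      Φ (∑ α ∈ Finset.range (N + 1),
          ((α.factorial : ℂ)⁻¹) •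
            ((⇑(pderiv (1 : Fin 2)))^[α] f * (⇑(pderiv (0 : Fin 2)))^[α] g)) := by
  rw [← heisenbergStar_apply]
  exact Φ_mul_Φ_of_degreeOf_le ((degreeOf_le_totalDegree f 1).trans hN) g
end
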